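/- For 0 < s < 1, the function F6(r) = ((1+r)(1-r)^{1-s} - (1-r^2))/r on (0,1) is concave (its second derivative is ≤ 0), its derivative tends to s(s+1)/2 as r → 0+ and to -∞ as r → 1-, and consequently the equation (1-r)^{-s}(r^2(1-r)^s + r^2 s - r^2 + (1-r)^s + r s - 1)/r^2 = 0 has a unique root r_s in (0,1) at which F6 attains its maximum over (0,1). -/

import Mathlib

/-!
Write `F6' s r = (1 - r) ^ (-s) * N(r) / r ^ 2`, where `N = F6Num s` is the numerator of the
displayed equation. The sign of `F6''` on `(0, 1)` is that of
`2 (1 - r) (1 - s r - (1 - r) ^ s) - s (1 - s) r ^ 2 (1 + r)`, which is negative because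
Bernoulli's inequality bounds the first term by `s (1 - s) r ^ 2`. Since `N` vanishes to second
order at `0` with `N''(0) = s (s + 1)`, l'Hôpital's rule gives `F6'(0+) = s (s + 1) / 2 > 0`,
while `N(1) = 2 (s - 1) < 0` and `(1 - r) ^ (-s) → ∞` give `F6'(1-) = -∞`. Hence the strictly
decreasing `F6'` has exactly one zero on `(0, 1)`, and the concave `F6` is maximal there.
-/

open Real Set Filter Topology

lemma hasDerivAt_one_sub_rpow (p : ℝ) {r : ℝ} (hr : r < 1) :
    HasDerivAt (fun x : ℝ => (1 - x) ^ p) (-(p * (1 - r) ^ (p - 1))) r := by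
  simpa using ((hasDerivAt_id' r).const_sub 1).rpow_const (p := p) (Or.inl (sub_pos.2 hr).ne')

lemma le_of_hasDerivAt_nonneg_of_mem_Ico {f f' : ℝ → ℝ} {a b x : ℝ}
    (hf : ∀ y ∈ Ico a b, HasDerivAt f (f' y) y) (hf' : ∀ y ∈ Ioo a b, 0 ≤ f' y)
    (hx : x ∈ Ico a b) : f a ≤ f x := by
  refine monotoneOn_of_hasDerivWithinAt_nonneg (f' := f') (convex_Ico a b)
    (fun y hy => (hf y hy).continuousAt.continuousWithinAt) (fun y hy => ?_) (fun y hy => ?_)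
    (left_mem_Ico.2 (hx.1.trans_lt hx.2)) hx hx.1
  · rw [interior_Ico] at hy ⊢
    exact (hf y (Ioo_subset_Ico_self hy)).hasDerivWithinAt
  · rw [interior_Ico] at hy
    exact hf' y hy

lemma ConcaveOn.isMaxOn_of_hasDerivAt_eq_zero {S : Set ℝ} {f : ℝ → ℝ} {c : ℝ}
    (hf : ConcaveOn ℝ S f) (hc : c ∈ S) (hfc : HasDerivAt f 0 c) : IsMaxOn f S c := by
  refine isMaxOn_iff.2 fun x hx => ?_
  rcases lt_trichotomy x c with hxc | rfl | hcx
  · have := hf.le_slope_of_hasDerivAt hx hc hxc hfc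
    rw [slope_def_field, le_div_iff₀ (sub_pos.2 hxc)] at this
    linarith
  · exact le_rfl
  · have := hf.slope_le_of_hasDerivAt hc hx hcx hfc
    rw [slope_def_field, div_le_iff₀ (sub_pos.2 hcx)] at this
    linarith

lemma tendsto_div_sq_nhdsGT_zero {f f' f'' : ℝ → ℝ}
    (hf : ∀ᶠ x in 𝓝 0, HasDerivAt f (f' x) x) (hf' : ∀ᶠ x in 𝓝 0, HasDerivAt f' (f'' x) x)
    (hf'' : ContinuousAt f'' 0) (h0 : f 0 = 0) (h0' : f' 0 = 0) :
    Tendsto (fun x => f x / x ^ 2) (𝓝[>] 0) (𝓝 (f'' 0 / 2)) := by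
  have hlin : Tendsto (fun x : ℝ => 2 * x) (𝓝[>] 0) (𝓝 0) := by
    simpa using ((continuous_const_mul (2:ℝ)).tendsto 0).mono_left nhdsWithin_le_nhds
  have hsq : Tendsto (fun x : ℝ => x ^ 2) (𝓝[>] 0) (𝓝 0) := by
    simpa using ((continuous_pow 2).tendsto (0:ℝ)).mono_left nhdsWithin_le_nhds
  have hfa : Tendsto f (𝓝[>] 0) (𝓝 0) := by
    simpa [h0] using hf.self_of_nhds.continuousAt.tendsto.mono_left nhdsWithin_le_nhds
  have hf'a : Tendsto f' (𝓝[>] 0) (𝓝 0) := by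
    simpa [h0'] using hf'.self_of_nhds.continuousAt.tendsto.mono_left nhdsWithin_le_nhds
  have hf'lim : Tendsto (fun x => f' x / (2 * x)) (𝓝[>] 0) (𝓝 (f'' 0 / 2)) :=
    HasDerivAt.lhopital_zero_nhdsGT (hf'.filter_mono nhdsWithin_le_nhds)
      (.of_forall fun x => by simpa using (hasDerivAt_id' x).const_mul 2)
      (.of_forall fun _ => two_ne_zero) hf'a hlin
      ((hf''.tendsto.mono_left nhdsWithin_le_nhds).div_const 2)
  exact HasDerivAt.lhopital_zero_nhdsGT (hf.filter_mono nhdsWithin_le_nhds)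
    (.of_forall fun x => by simpa using hasDerivAt_pow 2 x)
    (eventually_mem_nhdsWithin.mono fun x (hx : 0 < x) => by positivity) hfa hsq hf'lim

/-- Half the difference of the two sides vanishes at `0` and has derivative
`(1 + s) * (1 - s * t - (1 - t) ^ s)`, which is nonnegative by Bernoulli's inequality. -/
lemma bernoulli_gap_mul_le {s t : ℝ} (hs0 : 0 ≤ s) (hs1 : s ≤ 1) (ht : t ∈ Ico (0:ℝ) 1) :
    2 * (1 - t) * (1 - s * t - (1 - t) ^ s) ≤ s * (1 - s) * t ^ 2 := by
  have hbernoulli : ∀ y ∈ Ioo (0:ℝ) 1, 0 ≤ (1 + s) * (1 - s * y - (1 - y) ^ s) := by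
    intro y hy
    have := rpow_one_add_le_one_add_mul_self (s := -y) (by linarith [hy.2]) hs0 hs1
    rw [← sub_eq_add_neg] at this
    have : 0 ≤ 1 - s * y - (1 - y) ^ s := by linarith
    positivity
  have hmono := le_of_hasDerivAt_nonneg_of_mem_Ico
    (f := fun t => s * (1 - s) * t ^ 2 / 2 - (1 - t) * (1 - s * t - (1 - t) ^ s))
    (fun y hy => ?_) hbernoulli ht
  · simp only [ne_eq, OfNat.ofNat_ne_zero, not_false_eq_true, zero_pow, mul_zero, zero_div,
      sub_zero, one_rpow, sub_self, sub_nonneg] at hmono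
    linarith
  · have := (((hasDerivAt_pow 2 y).const_mul (s * (1 - s))).div_const 2).sub
      (((hasDerivAt_id' y).const_sub 1).mul
        ((((hasDerivAt_id' y).const_mul s).const_sub 1).sub (hasDerivAt_one_sub_rpow s hy.2)))
    refine this.congr_deriv ?_
    have h1 : (1 - y) ^ (s - 1) = (1 - y) ^ s / (1 - y) := rpow_sub_one (by linarith [hy.2]) s
    have : (1:ℝ) - y ≠ 0 := by linarith [hy.2]
    simp only [h1, Pi.sub_apply]
    field_simp
    ring

noncomputable def F6 (s r : ℝ) : ℝ := ((1 + r) * (1 - r) ^ (1 - s) - (1 - r ^ 2)) / r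

noncomputable def F6Num (s r : ℝ) : ℝ :=
  r ^ 2 * (1 - r) ^ s + r ^ 2 * s - r ^ 2 + (1 - r) ^ s + r * s - 1

noncomputable def F6Num' (s r : ℝ) : ℝ :=
  2 * r * (1 - r) ^ s - s * (1 + r ^ 2) * (1 - r) ^ (s - 1) + 2 * (s - 1) * r + s

noncomputable def F6Num'' (s r : ℝ) : ℝ :=
  2 * (1 - r) ^ s - 4 * s * r * (1 - r) ^ (s - 1) + s * (s - 1) * (1 + r ^ 2) * (1 - r) ^ (s - 2)
    + 2 * (s - 1)

noncomputable def F6' (s r : ℝ) : ℝ := (1 - r) ^ (-s) * F6Num s r / r ^ 2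

noncomputable def F6'' (s r : ℝ) : ℝ :=
  (2 * (1 - r) * (1 - s * r - (1 - r) ^ s) - s * (1 - s) * r ^ 2 * (1 + r)) /
    (r ^ 3 * ((1 - r) * (1 - r) ^ s))

lemma hasDerivAt_F6Num (s : ℝ) {r : ℝ} (hr : r < 1) : HasDerivAt (F6Num s) (F6Num' s r) r := by
  have := (((((hasDerivAt_pow 2 r).mul (hasDerivAt_one_sub_rpow s hr)).add
    ((hasDerivAt_pow 2 r).mul_const s)).sub (hasDerivAt_pow 2 r)).add
    (hasDerivAt_one_sub_rpow s hr)).add ((hasDerivAt_id' r).mul_const s) |>.sub_const 1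
  exact this.congr_deriv (by simp only [F6Num']; push_cast; ring)

lemma hasDerivAt_F6Num' (s : ℝ) {r : ℝ} (hr : r < 1) : HasDerivAt (F6Num' s) (F6Num'' s r) r := by
  have := (((((hasDerivAt_id' r).const_mul 2).mul (hasDerivAt_one_sub_rpow s hr)).sub
    ((((hasDerivAt_pow 2 r).const_add 1).const_mul s).mul (hasDerivAt_one_sub_rpow (s - 1) hr))).add
    ((hasDerivAt_id' r).const_mul (2 * (s - 1)))).add_const s
  refine this.congr_deriv ?_
  rw [show s - 1 - 1 = s - 2 by ring]
  simp only [F6Num'']; push_cast; ring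

lemma hasDerivAt_F6 (s : ℝ) {r : ℝ} (hr : r ∈ Ioo (0:ℝ) 1) : HasDerivAt (F6 s) (F6' s r) r := by
  have h1 : 0 < 1 - r := sub_pos.2 hr.2
  have := ((((hasDerivAt_id' r).const_add 1).mul (hasDerivAt_one_sub_rpow (1 - s) hr.2)).sub
    ((hasDerivAt_pow 2 r).const_sub 1)).div (hasDerivAt_id' r) hr.1.ne'
  refine this.congr_deriv ?_
  have hu : 0 < (1 - r) ^ s := rpow_pos_of_pos h1 s
  simp only [F6', F6Num, Pi.mul_apply, Pi.sub_apply]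
  rw [show 1 - s - 1 = -s by ring, rpow_sub h1, rpow_one, rpow_neg h1.le]
  field_simp
  ring

lemma hasDerivAt_F6' (s : ℝ) {r : ℝ} (hr : r ∈ Ioo (0:ℝ) 1) : HasDerivAt (F6' s) (F6'' s r) r := by
  have h1 : 0 < 1 - r := sub_pos.2 hr.2
  have := ((hasDerivAt_one_sub_rpow (-s) hr.2).mul (hasDerivAt_F6Num s hr.2)).div
    (hasDerivAt_pow 2 r) (pow_ne_zero 2 hr.1.ne')
  refine this.congr_deriv ?_
  have hu : 0 < (1 - r) ^ s := rpow_pos_of_pos h1 s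
  have hr0 := hr.1.ne'
  simp only [F6'', F6Num, F6Num', Pi.mul_apply]
  rw [rpow_sub_one h1.ne' s, rpow_sub_one h1.ne' (-s), rpow_neg h1.le]
  field_simp
  ring

lemma F6''_neg {s r : ℝ} (hs0 : 0 < s) (hs1 : s < 1) (hr : r ∈ Ioo (0:ℝ) 1) : F6'' s r < 0 := by
  have h1 : 0 < 1 - r := sub_pos.2 hr.2
  have hgap := bernoulli_gap_mul_le hs0.le hs1.le (Ioo_subset_Ico_self hr)
  have hr3 : 0 < s * (1 - s) * r ^ 3 := by have := hr.1; have := sub_pos.2 hs1; positivity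
  have hu : 0 < (1 - r) ^ s := rpow_pos_of_pos h1 s
  refine div_neg_of_neg_of_pos ?_ (by have := hr.1; positivity)
  nlinarith

lemma strictAntiOn_F6' {s : ℝ} (hs0 : 0 < s) (hs1 : s < 1) : StrictAntiOn (F6' s) (Ioo 0 1) :=
  strictAntiOn_of_hasDerivWithinAt_neg (convex_Ioo 0 1)
    (fun r hr => (hasDerivAt_F6' s hr).continuousAt.continuousWithinAt)
    (fun r hr => by rw [interior_Ioo] at hr ⊢; exact (hasDerivAt_F6' s hr).hasDerivWithinAt)
    (fun r hr => F6''_neg hs0 hs1 (by rwa [interior_Ioo] at hr))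

lemma concaveOn_F6 {s : ℝ} (hs0 : 0 < s) (hs1 : s < 1) : ConcaveOn ℝ (Ioo 0 1) (F6 s) :=
  concaveOn_of_hasDerivWithinAt2_nonpos (convex_Ioo 0 1)
    (fun r hr => (hasDerivAt_F6 s hr).continuousAt.continuousWithinAt)
    (fun r hr => by rw [interior_Ioo] at hr ⊢; exact (hasDerivAt_F6 s hr).hasDerivWithinAt)
    (fun r hr => by rw [interior_Ioo] at hr ⊢; exact (hasDerivAt_F6' s hr).hasDerivWithinAt)
    (fun r hr => (F6''_neg hs0 hs1 (by rwa [interior_Ioo] at hr)).le)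

lemma tendsto_F6'_nhdsGT_zero (s : ℝ) : Tendsto (F6' s) (𝓝[>] 0) (𝓝 (s * (s + 1) / 2)) := by
  have hnear : ∀ᶠ x in 𝓝 (0:ℝ), x < 1 := gt_mem_nhds one_pos
  have hnum := tendsto_div_sq_nhdsGT_zero (hnear.mono fun x hx => hasDerivAt_F6Num s hx)
    (hnear.mono fun x hx => hasDerivAt_F6Num' s hx)
    (by unfold F6Num''; fun_prop (disch := norm_num)) (by simp [F6Num]) (by simp [F6Num'])
  have hpow : Tendsto (fun r : ℝ => (1 - r) ^ (-s)) (𝓝[>] 0) (𝓝 1) := by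
    simpa using ((hasDerivAt_one_sub_rpow (-s) one_pos).continuousAt.tendsto).mono_left
      nhdsWithin_le_nhds
  have hlim : 1 * (F6Num'' s 0 / 2) = s * (s + 1) / 2 := by
    simp only [F6Num'', sub_zero, one_rpow]; ring
  exact hlim ▸ (hpow.mul hnum).congr fun r => by simp only [F6', mul_div_assoc]

lemma tendsto_F6'_nhdsLT_one {s : ℝ} (hs0 : 0 < s) (hs1 : s < 1) :
    Tendsto (F6' s) (𝓝[<] 1) atBot := by
  have hsub : Tendsto (fun r : ℝ => 1 - r) (𝓝[<] 1) (𝓝[>] 0) := by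
    refine tendsto_nhdsWithin_iff.2 ⟨?_, ?_⟩
    · simpa using ((continuous_sub_left (1:ℝ)).tendsto 1).mono_left nhdsWithin_le_nhds
    · filter_upwards [self_mem_nhdsWithin] with r (hr : r < 1) using sub_pos.2 hr
  have hpow := (tendsto_rpow_neg_nhdsGT_zero (neg_lt_zero.2 hs0)).comp hsub
  have hnum : Tendsto (fun r => F6Num s r / r ^ 2) (𝓝[<] 1) (𝓝 (2 * (s - 1))) := by
    have : ContinuousAt (fun r => F6Num s r / r ^ 2) 1 := by
      unfold F6Num; fun_prop (disch := first | exact Or.inr hs0.le | norm_num)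
    convert this.tendsto.mono_left nhdsWithin_le_nhds using 2
    simp only [F6Num, sub_self, zero_rpow hs0.ne']; ring
  convert hpow.atTop_mul_neg (by linarith) hnum using 1
  funext r; simp only [F6', Function.comp, mul_div_assoc]

theorem stmt13 (s : ℝ) (hs0 : 0 < s) (hs1 : s < 1) :
    (∀ r ∈ Ioo (0:ℝ) 1,
      deriv (deriv (fun r : ℝ => ((1+r)*(1-r)^(1-s) - (1-r^2))/r)) r ≤ 0) ∧
    Tendsto (deriv (fun r : ℝ => ((1+r)*(1-r)^(1-s) - (1-r^2))/r))
      (nhdsWithin 0 (Ioi 0)) (nhds (s*(s+1)/2)) ∧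
    Tendsto (deriv (fun r : ℝ => ((1+r)*(1-r)^(1-s) - (1-r^2))/r))
      (nhdsWithin 1 (Iio 1)) atBot ∧
    ∃! r : ℝ, r ∈ Ioo (0:ℝ) 1 ∧
      (1-r)^(-s) * (r^2*(1-r)^s + r^2*s - r^2 + (1-r)^s + r*s - 1) / r^2 = 0 ∧
      ∀ r' ∈ Ioo (0:ℝ) 1,
        ((1+r')*(1-r')^(1-s) - (1-r'^2))/r' ≤ ((1+r)*(1-r)^(1-s) - (1-r^2))/r := by
  have hderiv : EqOn (deriv (F6 s)) (F6' s) (Ioo 0 1) := fun r hr => (hasDerivAt_F6 s hr).deriv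
  have h0 := tendsto_F6'_nhdsGT_zero s
  have h1 := tendsto_F6'_nhdsLT_one hs0 hs1
  obtain ⟨r, hr, hr0⟩ : ∃ r ∈ Ioo (0:ℝ) 1, F6' s r = 0 :=
    isPreconnected_Ioo.intermediate_value_Iio (le_principal_iff.2 (Ioo_mem_nhdsLT one_pos))
      (le_principal_iff.2 (Ioo_mem_nhdsGT one_pos))
      (fun x hx => (hasDerivAt_F6' s hx).continuousAt.continuousWithinAt) h1 h0
      (show (0:ℝ) < s * (s + 1) / 2 by positivity)
  refine ⟨fun x hx => ?_, h0.congr' (eventuallyEq_of_mem (Ioo_mem_nhdsGT one_pos) hderiv.symm),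
    h1.congr' (eventuallyEq_of_mem (Ioo_mem_nhdsLT one_pos) hderiv.symm),
    r, ⟨hr, hr0, isMaxOn_iff.1 ?_⟩,
    fun r' ⟨hr', hr'0, _⟩ => (strictAntiOn_F6' hs0 hs1).injOn hr' hr (hr'0.trans hr0.symm)⟩
  · show deriv (deriv (F6 s)) x ≤ 0
    rw [(eventuallyEq_of_mem (isOpen_Ioo.mem_nhds hx) hderiv).deriv_eq,
      (hasDerivAt_F6' s hx).deriv]
    exact (F6''_neg hs0 hs1 hx).le
  · exact (concaveOn_F6 hs0 hs1).isMaxOn_of_hasDerivAt_eq_zero hr (hr0 ▸ hasDerivAt_F6 s hr)
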